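/- In the setting of homogeneous rates αₙ = α, βₙ = β ≠ 0 (n ≥ 1) and pure state ψ with 0 < λ < 1, |ζ| = 1: if λ ≥ (1−α)/2 then T_ψ admits no pure invariant normal state, i.e., there is no unit vector ξ ∈ ℓ²(ℕ) such that ⟨T_ψ(x) ξ, ξ⟩ = ⟨x ξ, ξ⟩ for all bounded x. -/

import Mathlib

/-!
Testing invariance on `x = 1` and on the projection onto `ξ` gives
`λ (‖t₁ ξ‖² + ‖t₂ ξ‖²) = 1 = λ (|⟪ξ, t₁ ξ⟫|² + |⟪ξ, t₂ ξ⟫|²)`, so by Bessel's inequality `ξ` is a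
joint eigenvector of `t₁` and `t₂`. With `γ = i ζ √((1 - λ) / λ)`, an eigenvector of
`t₁ = α + γ β s*` is geometric, `ξₙ = rⁿ ξ₀`, and the eigenvalue equation of `t₂ = β s + γ a`
in coordinates `0` and `1` forces `β = γ (1 - α) r`. Square-summability needs `|r| < 1`, i.e.
`β² < (1 - λ) / λ · (1 - α)²`, which by `β² = 1 - α²` means `λ < (1 - α) / 2`.
-/

noncomputable section
open ContinuousLinearMap

abbrev H : Type := lp (fun _ : ℕ => ℂ) 2

def e (n : ℕ) : H := lp.single 2 n 1

section InvariantVectorState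

variable {𝕜 E : Type*} [RCLike 𝕜] [NormedAddCommGroup E] [InnerProductSpace 𝕜 E]

theorem norm_sq_eq_norm_inner_sq_add_norm_sub_sq {ξ : E} (hξ : ‖ξ‖ = 1) (v : E) :
    ‖v‖ ^ 2 = ‖(inner 𝕜 ξ v : 𝕜)‖ ^ 2 + ‖v - (inner 𝕜 ξ v : 𝕜) • ξ‖ ^ 2 := by
  have horth : (inner 𝕜 ((inner 𝕜 ξ v : 𝕜) • ξ) (v - (inner 𝕜 ξ v : 𝕜) • ξ) : 𝕜) = 0 := by
    rw [inner_smul_left, inner_sub_right, inner_smul_right, inner_self_eq_norm_sq_to_K, hξ]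
    simp
  simpa only [sq, add_sub_cancel, norm_smul, hξ, mul_one] using
    norm_add_sq_eq_norm_sq_add_norm_sq_of_inner_eq_zero _ _ horth

variable [CompleteSpace E]

theorem apply_eq_inner_smul_of_invariant {ξ : E} (hξ : ‖ξ‖ = 1) {l : 𝕜} {t₁ t₂ : E →L[𝕜] E}
    (hinv : ∀ x : E →L[𝕜] E,
      (inner 𝕜 ξ ((l • (adjoint t₁ ∘L x ∘L t₁ + adjoint t₂ ∘L x ∘L t₂)) ξ) : 𝕜)
        = inner 𝕜 ξ (x ξ)) :
    t₁ ξ = (inner 𝕜 ξ (t₁ ξ) : 𝕜) • ξ ∧ t₂ ξ = (inner 𝕜 ξ (t₂ ξ) : 𝕜) • ξ := by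
  have hkraus (x : E →L[𝕜] E) :
      l * (inner 𝕜 (t₁ ξ) (x (t₁ ξ)) + inner 𝕜 (t₂ ξ) (x (t₂ ξ))) = inner 𝕜 ξ (x ξ) := by
    simpa only [FunLike.coe_smul, Pi.smul_apply, add_apply, comp_apply, inner_smul_right,
      inner_add_right, adjoint_inner_right] using hinv x
  have hid : l * (((‖t₁ ξ‖ ^ 2 + ‖t₂ ξ‖ ^ 2 : ℝ)) : 𝕜) = 1 := by
    simpa [inner_self_eq_norm_sq_to_K, hξ] using hkraus 1
  have hproj :
      l * (((‖(inner 𝕜 ξ (t₁ ξ) : 𝕜)‖ ^ 2 + ‖(inner 𝕜 ξ (t₂ ξ) : 𝕜)‖ ^ 2 : ℝ)) : 𝕜) = 1 := by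
    have h := hkraus (InnerProductSpace.rankOne 𝕜 ξ ξ)
    rw [InnerProductSpace.rankOne_apply, InnerProductSpace.rankOne_apply,
      InnerProductSpace.rankOne_apply, inner_smul_right, inner_smul_right, inner_smul_right,
      ← inner_conj_symm (t₁ ξ), ← inner_conj_symm (t₂ ξ), RCLike.mul_conj, RCLike.mul_conj,
      inner_self_eq_norm_sq_to_K, hξ] at h
    simpa using h
  have hl : l ≠ 0 := by rintro rfl; simp at hid
  have hrest : ‖t₁ ξ - (inner 𝕜 ξ (t₁ ξ) : 𝕜) • ξ‖ ^ 2 + ‖t₂ ξ - (inner 𝕜 ξ (t₂ ξ) : 𝕜) • ξ‖ ^ 2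
      = 0 := by
    have h := hid.trans hproj.symm
    rw [mul_right_inj' hl, RCLike.ofReal_inj,
      norm_sq_eq_norm_inner_sq_add_norm_sub_sq (𝕜 := 𝕜) hξ (t₁ ξ),
      norm_sq_eq_norm_inner_sq_add_norm_sub_sq (𝕜 := 𝕜) hξ (t₂ ξ)] at h
    linarith
  obtain ⟨h₁, h₂⟩ := (add_eq_zero_iff_of_nonneg (by positivity) (by positivity)).mp hrest
  exact ⟨sub_eq_zero.mp (by simpa using h₁), sub_eq_zero.mp (by simpa using h₂)⟩

end InvariantVectorState

theorem inner_e_left (v : H) (n : ℕ) : (inner ℂ (e n) v : ℂ) = v n := by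
  simp [e, lp.inner_single_left]

theorem adjoint_apply_e_apply (T : H →L[ℂ] H) (n k : ℕ) :
    adjoint T (e n) k = starRingEnd ℂ (T (e k) n) := by
  rw [← inner_e_left, adjoint_inner_right, ← inner_conj_symm, inner_e_left]

theorem apply_eq_inner_adjoint_e (T : H →L[ℂ] H) (v : H) (n : ℕ) :
    T v n = inner ℂ (adjoint T (e n)) v := by
  rw [adjoint_inner_left, inner_e_left]

theorem diagonal_apply {a : H →L[ℂ] H} {d : ℕ → ℂ} (ha : ∀ n, a (e n) = d n • e n)
    (v : H) (n : ℕ) : a v n = d n * v n := by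
  have hadj : adjoint a (e n) = starRingEnd ℂ (d n) • e n := by
    ext k
    rw [adjoint_apply_e_apply, ha]
    rcases eq_or_ne k n with rfl | hkn
    · simp [e]
    · simp [e, hkn, Ne.symm hkn]
  rw [apply_eq_inner_adjoint_e, hadj, inner_smul_left, RCLike.conj_conj, inner_e_left]

section Shift

variable {s : H →L[ℂ] H}

theorem adjoint_shift_apply (hs : ∀ n, s (e n) = e (n + 1)) (v : H) (n : ℕ) :
    adjoint s v n = v (n + 1) := by
  rw [← inner_e_left, adjoint_inner_right, hs, inner_e_left]

theorem shift_apply_zero (hs : ∀ n, s (e n) = e (n + 1)) (v : H) : s v 0 = 0 := by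
  have hadj : adjoint s (e 0) = 0 := by
    ext k
    rw [adjoint_apply_e_apply, hs]
    simp [e]
  rw [apply_eq_inner_adjoint_e, hadj, inner_zero_left]

theorem shift_apply_succ (hs : ∀ n, s (e n) = e (n + 1)) (v : H) (n : ℕ) :
    s v (n + 1) = v n := by
  have hadj : adjoint s (e (n + 1)) = e n := by
    ext k
    rw [adjoint_apply_e_apply, hs]
    simp [e, Pi.single_apply, @eq_comm _ n]
  rw [apply_eq_inner_adjoint_e, hadj, inner_e_left]

theorem apply_eq_pow_mul_of_adjoint_shift_eigen (hs : ∀ n, s (e n) = e (n + 1)) {ξ : H} {r : ℂ}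
    (h : adjoint s ξ = r • ξ) (n : ℕ) : ξ n = r ^ n * ξ 0 := by
  induction n with
  | zero => simp
  | succ n ih =>
    rw [← adjoint_shift_apply hs, h, lp.coeFn_smul, Pi.smul_apply, ih, smul_eq_mul, pow_succ]
    ring

theorem apply_eq_pow_mul_of_eigen (hs : ∀ n, s (e n) = e (n + 1))
    {α μ c : ℂ} (hμ : μ ≠ 0) {ξ : H} (h : (α • 1 + μ • adjoint s) ξ = c • ξ) (n : ℕ) :
    ξ n = ((c - α) / μ) ^ n * ξ 0 := by
  refine apply_eq_pow_mul_of_adjoint_shift_eigen hs ?_ n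
  simp only [add_apply, smul_apply, one_apply_eq_self] at h
  rw [div_eq_inv_mul, mul_smul, sub_smul, ← h, add_sub_cancel_left, smul_smul, inv_mul_cancel₀ hμ,
    one_smul]

end Shift

theorem apply_zero_ne_zero_of_apply_eq_pow_mul {ξ : H} (hξ : ξ ≠ 0) {r : ℂ}
    (h : ∀ n, ξ n = r ^ n * ξ 0) : ξ 0 ≠ 0 :=
  fun h0 => hξ (lp.ext (funext fun n => by simp [h n, h0]))

theorem norm_lt_one_of_apply_eq_pow_mul {ξ : H} (hξ : ξ ≠ 0) {r : ℂ}
    (h : ∀ n, ξ n = r ^ n * ξ 0) : ‖r‖ < 1 := by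
  have h0 := apply_zero_ne_zero_of_apply_eq_pow_mul hξ h
  have hsum : Summable fun n => ‖ξ n‖ ^ 2 := by
    simpa using (lp.memℓp ξ).summable (by norm_num)
  have hterm (n : ℕ) : ‖ξ n‖ ^ 2 = (‖r‖ ^ 2) ^ n * ‖ξ 0‖ ^ 2 := by
    rw [h n, norm_mul, norm_pow, mul_pow, ← pow_mul, ← pow_mul, mul_comm n]
  rw [funext hterm, summable_mul_right_iff (by positivity), summable_geometric_iff_norm_lt_one,
    norm_pow, norm_norm] at hsum
  exact (pow_lt_one_iff_of_nonneg (norm_nonneg r) two_ne_zero).mp hsum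

theorem eq_mul_of_eigen {s a : H →L[ℂ] H} (hs : ∀ n, s (e n) = e (n + 1)) {α : ℂ}
    (ha0 : a (e 0) = e 0) (ha : ∀ n, 1 ≤ n → a (e n) = α • e n)
    {β γ c r : ℂ} {ξ : H} (h : (β • s + γ • a) ξ = c • ξ) (hgeom : ∀ n, ξ n = r ^ n * ξ 0)
    (h0 : ξ 0 ≠ 0) : β = γ * (1 - α) * r := by
  have hdiag : ∀ n, a (e n) = (if n = 0 then 1 else α) • e n := by
    rintro (_ | n)
    · simp [ha0]
    · simp [ha]
  have hcoord (n : ℕ) : β * s ξ n + γ * a ξ n = c * ξ n := by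
    simpa only [add_apply, smul_apply, lp.coeFn_add, lp.coeFn_smul, Pi.add_apply, Pi.smul_apply,
      smul_eq_mul] using congrArg (fun v : H => v n) h
  have hc : c = γ := by
    have h₀ := hcoord 0
    rw [shift_apply_zero hs, diagonal_apply hdiag] at h₀
    simp only [mul_zero, zero_add, ↓reduceIte, one_mul] at h₀
    exact (mul_right_cancel₀ h0 h₀).symm
  have h₁ := hcoord 1
  rw [shift_apply_succ hs, diagonal_apply hdiag, hgeom 1, hc] at h₁
  simp only [one_ne_zero, ↓reduceIte, pow_one] at h₁
  refine mul_right_cancel₀ h0 ?_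
  linear_combination h₁

theorem two_mul_lt_one_sub_of_abs_lt {α β l : ℝ} (hαβ : α ^ 2 + β ^ 2 = 1) (hl : 0 < l)
    (h : |β| < √((1 - l) / l) * (1 - α)) : 2 * l < 1 - α := by
  have hα : α ≤ 1 := by nlinarith [sq_nonneg β]
  have hpos : 0 < √((1 - l) / l) * (1 - α) := (abs_nonneg β).trans_lt h
  have hsqrt : 0 < (1 - l) / l := Real.sqrt_pos.mp (pos_of_mul_pos_left hpos (by linarith))
  have h1α : 0 < 1 - α := pos_of_mul_pos_right hpos (Real.sqrt_nonneg _)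
  have hsq : β ^ 2 < (1 - l) / l * (1 - α) ^ 2 := by
    rw [← sq_abs, ← Real.sq_sqrt hsqrt.le, ← mul_pow]
    exact pow_lt_pow_left₀ h (abs_nonneg β) two_ne_zero
  rw [div_mul_eq_mul_div, lt_div_iff₀ hl] at hsq
  nlinarith

/-- homogeneous rates αₙ = α, βₙ = β ≠ 0 (n ≥ 1), pure state ψ with
0 < λ < 1, |ζ| = 1.  If λ ≥ (1−α)/2 then T_ψ(x) = λ(t₁* x t₁ + t₂* x t₂) admits no pure
invariant normal state: there is no unit vector ξ with ⟨T_ψ(x)ξ, ξ⟩ = ⟨xξ, ξ⟩ for all x. -/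
theorem no_pure_invariant_state (αc βc : ℝ) (hβc : βc ≠ 0)
    (hαβ : αc ^ 2 + βc ^ 2 = 1)
    (l : ℝ) (hl0 : 0 < l) (hl1 : l < 1) (ζ : ℂ) (hζ : ‖ζ‖ = 1)
    (hll : (1 - αc) / 2 ≤ l)
    (s a : H →L[ℂ] H)
    (hs : ∀ n, s (e n) = e (n + 1))
    (ha0 : a (e 0) = e 0)
    (ha : ∀ n, 1 ≤ n → a (e n) = (αc : ℂ) • e n)
    (t₁ t₂ : H →L[ℂ] H)
    (ht₁ : t₁ = (αc : ℂ) • 1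
        + (Complex.I * ζ * ((Real.sqrt ((1 - l) / l) : ℝ) : ℂ) * (βc : ℂ)) • adjoint s)
    (ht₂ : t₂ = (βc : ℂ) • s + (Complex.I * ζ * ((Real.sqrt ((1 - l) / l) : ℝ) : ℂ)) • a) :
    ¬ ∃ ξ : H, ‖ξ‖ = 1 ∧
      ∀ x : H →L[ℂ] H,
        (inner ℂ ξ (((l : ℂ) • (adjoint t₁ ∘L x ∘L t₁ + adjoint t₂ ∘L x ∘L t₂)) ξ) : ℂ)
          = (inner ℂ ξ (x ξ) : ℂ) := by
  rintro ⟨ξ, hξ, hinv⟩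
  set γ : ℂ := Complex.I * ζ * ((Real.sqrt ((1 - l) / l) : ℝ) : ℂ)
  have hγ : ‖γ‖ = √((1 - l) / l) := by simp [γ, hζ]
  have hγ0 : γ ≠ 0 := norm_pos_iff.mp (hγ ▸ Real.sqrt_pos.mpr (div_pos (by linarith) hl0))
  obtain ⟨h₁, h₂⟩ := apply_eq_inner_smul_of_invariant hξ hinv
  rw [ht₁] at h₁
  rw [ht₂] at h₂
  have hξ0 : ξ ≠ 0 := by rintro rfl; simp at hξ
  have hgeom := apply_eq_pow_mul_of_eigen hs (mul_ne_zero hγ0 (by exact_mod_cast hβc)) h₁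
  have hr := norm_lt_one_of_apply_eq_pow_mul hξ0 hgeom
  have hβ := eq_mul_of_eigen hs ha0 ha h₂ hgeom
    (apply_zero_ne_zero_of_apply_eq_pow_mul hξ0 hgeom)
  have h1α : 0 < 1 - αc := by nlinarith [sq_pos_of_ne_zero hβc]
  have hlt : |βc| < √((1 - l) / l) * (1 - αc) := by
    have := congrArg norm hβ
    rw [norm_mul, norm_mul, ← Complex.ofReal_one, ← Complex.ofReal_sub, Complex.norm_real,
      Complex.norm_real, Real.norm_of_nonneg h1α.le, hγ] at this
    rw [← Real.norm_eq_abs, this]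
    exact mul_lt_of_lt_one_right (by positivity) hr
  linarith [two_mul_lt_one_sub_of_abs_lt hαβ hl0 hlt]
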